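/- arXiv:2004.04068 — 5 statements merged into one kernel-verified Lean document; each statement's English description precedes it below -/
import Mathlib

section
/- Let H be a quasi-ideal of a Leibniz algebra L over a field F, let h ∈ H and x ∈ L. If [x,h] ∈ H, then [h,x] ∈ H. -/
/-! Basic definitions for (right) Leibniz algebras given by a bilinear bracket
on a vector space, following Towers, "Quasi-ideals of Leibniz algebras". -/

section LeibnizDefs

variable {F L : Type*} [Field F] [AddCommGroup L] [Module F L]

/-- The (right) Leibniz identity for a bilinear bracket `b`:
`[x,[y,z]] = [[x,y],z] - [[x,z],y]`. -/
def IsLeibniz (b : L →ₗ[F] L →ₗ[F] L) : Prop :=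
  ∀ x y z : L, b x (b y z) = b (b x y) z - b (b x z) y

/-- `[A,C]`: the span of all brackets `[a,c]` with `a ∈ A`, `c ∈ C`. -/
def bspan (b : L →ₗ[F] L →ₗ[F] L) (A C : Submodule F L) : Submodule F L :=
  Submodule.span F {z : L | ∃ a ∈ A, ∃ c ∈ C, z = b a c}

/-- A subalgebra is a subspace `H` with `[H,H] ⊆ H`. -/
def IsSubalgebra (b : L →ₗ[F] L →ₗ[F] L) (H : Submodule F L) : Prop :=
  bspan b H H ≤ H

/-- An ideal is a subspace `A` with `[A,L] + [L,A] ⊆ A`. -/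
def IsIdeal (b : L →ₗ[F] L →ₗ[F] L) (A : Submodule F L) : Prop :=
  bspan b A ⊤ ⊔ bspan b ⊤ A ≤ A

/-- A quasi-ideal of `L` is a subspace `H` with `[H,K] + [K,H] ⊆ H + K`
for every subspace `K` of `L`. -/
def IsQuasiIdeal (b : L →ₗ[F] L →ₗ[F] L) (H : Submodule F L) : Prop :=
  ∀ K : Submodule F L, bspan b H K ⊔ bspan b K H ≤ H ⊔ K

/-- `H` is a quasi-ideal of the subalgebra `E`: `H ⊆ E` and
`[H,K] + [K,H] ⊆ H + K` for every subspace `K` of `E`. -/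
def IsQuasiIdealIn (b : L →ₗ[F] L →ₗ[F] L) (H E : Submodule F L) : Prop :=
  H ≤ E ∧ ∀ K : Submodule F L, K ≤ E → bspan b H K ⊔ bspan b K H ≤ H ⊔ K

/-- `H` is an `m`-step subquasi-ideal of `L`: there is a chain of subalgebras
`H = H_m qu H_{m-1} qu ... qu H_0 = L`, each a quasi-ideal of the next.
(Here `C i` is `H_i`.) -/
def IsSubquasiIdealSteps (b : L →ₗ[F] L →ₗ[F] L) (m : ℕ) (H : Submodule F L) : Prop :=
  ∃ C : ℕ → Submodule F L, C 0 = ⊤ ∧ C m = H ∧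
    (∀ i ≤ m, IsSubalgebra b (C i)) ∧
    ∀ i < m, IsQuasiIdealIn b (C (i + 1)) (C i)

/-- `H` is a subquasi-ideal of `L` if it is an `m`-step subquasi-ideal for some `m`. -/
def IsSubquasiIdeal (b : L →ₗ[F] L →ₗ[F] L) (H : Submodule F L) : Prop :=
  ∃ m : ℕ, IsSubquasiIdealSteps b m H

/-- Lower central series: `lowerCentral b K n` is `K^{n+1}` in the paper's notation,
i.e. `K^1 = K`, `K^{k+1} = [K^k, K]`. -/
def lowerCentral (b : L →ₗ[F] L →ₗ[F] L) (K : Submodule F L) : ℕ → Submodule F L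
  | 0 => K
  | n + 1 => bspan b (lowerCentral b K n) K

/-- Derived series: `derSeries b H n` is `H^{(n+1)}` in the paper's notation,
i.e. `H^{(1)} = H`, `H^{(k+1)} = [H^{(k)}, H^{(k)}]`. -/
def derSeries (b : L →ₗ[F] L →ₗ[F] L) (H : Submodule F L) : ℕ → Submodule F L
  | 0 => H
  | n + 1 => bspan b (derSeries b H n) (derSeries b H n)

/-- The core `H_L` of `H`: the sum of all ideals of `L` contained in `H`. -/
def coreOf (b : L →ₗ[F] L →ₗ[F] L) (H : Submodule F L) : Submodule F L :=
  sSup {A : Submodule F L | IsIdeal b A ∧ A ≤ H}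

/-- A derivation of the bracket `b`. -/
def IsDerivation (b : L →ₗ[F] L →ₗ[F] L) (d : L →ₗ[F] L) : Prop :=
  ∀ x y : L, d (b x y) = b (d x) y + b x (d y)

/-- `I`: the span of all squares `[x,x]`, `x ∈ L`. -/
def sqSpan (b : L →ₗ[F] L →ₗ[F] L) : Submodule F L :=
  Submodule.span F {z : L | ∃ x : L, z = b x x}

/-- The centre `Z(L) = {z | [z,x] = [x,z] = 0 for all x}`. -/
def lcenter (b : L →ₗ[F] L →ₗ[F] L) : Submodule F L where
  carrier := {z : L | ∀ x : L, b z x = 0 ∧ b x z = 0}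
  zero_mem' := by intro x; simp
  add_mem' := by
    intro y z hy hz x
    obtain ⟨h1, h2⟩ := hy x
    obtain ⟨h3, h4⟩ := hz x
    constructor <;> simp [h1, h2, h3, h4]
  smul_mem' := by
    intro c z hz x
    obtain ⟨h1, h2⟩ := hz x
    constructor <;> simp [h1, h2]

/-- The centre of a subalgebra `E`, as a subspace of `L`:
`Z(E) = {z ∈ E | [z,x] = [x,z] = 0 for all x ∈ E}`. -/
def centerIn (b : L →ₗ[F] L →ₗ[F] L) (E : Submodule F L) : Submodule F L where
  carrier := {z : L | z ∈ E ∧ ∀ x ∈ E, b z x = 0 ∧ b x z = 0}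
  zero_mem' := ⟨E.zero_mem, by intro x _; simp⟩
  add_mem' := by
    intro y z hy hz
    refine ⟨E.add_mem hy.1 hz.1, fun x hx => ?_⟩
    obtain ⟨h1, h2⟩ := hy.2 x hx
    obtain ⟨h3, h4⟩ := hz.2 x hx
    constructor <;> simp [h1, h2, h3, h4]
  smul_mem' := by
    intro c z hz
    refine ⟨E.smul_mem c hz.1, fun x hx => ?_⟩
    obtain ⟨h1, h2⟩ := hz.2 x hx
    constructor <;> simp [h1, h2]

/-- The subalgebra generated by a set `S`. -/
def subalgGen (b : L →ₗ[F] L →ₗ[F] L) (S : Set L) : Submodule F L :=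
  sInf {K : Submodule F L | IsSubalgebra b K ∧ S ⊆ K}

/-- `x` is a left Engel element: for each `y` there is `n` with `R_x^n(y) = 0`,
where `R_x(y) = [y,x]`. -/
def IsLeftEngel (b : L →ₗ[F] L →ₗ[F] L) (x : L) : Prop :=
  ∀ y : L, ∃ n : ℕ, ((b.flip x) ^ n) y = 0

end LeibnizDefs

variable {F L : Type*} [Field F] [AddCommGroup L] [Module F L]

/-- Let `H` be a quasi-ideal of a Leibniz algebra `L` over a field `F`,
let `h ∈ H` and `x ∈ L`. If `[x,h] ∈ H`, then `[h,x] ∈ H`. -/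
theorem quasiIdeal_bracket_mem (b : L →ₗ[F] L →ₗ[F] L) (hb : IsLeibniz b)
    (H : Submodule F L) (hH : IsQuasiIdeal b H)
    (h : L) (hh : h ∈ H) (x : L) (hxh : b x h ∈ H) :
    b h x ∈ H := by
  -- H is a subalgebra
  have hHH : ∀ u ∈ H, ∀ v ∈ H, b u v ∈ H := by
    intro u hu v hv
    have h1 : bspan b H H ≤ H := by
      have := hH H
      simpa using this
    exact h1 (Submodule.subset_span ⟨u, hu, v, hv, rfl⟩)
  by_cases hx : x ∈ H
  · exact hHH h hh x hx
  -- using the quasi-ideal property with K = F•x, write b h x = a + α • x with a ∈ H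
  have key : ∀ u ∈ H, ∃ a ∈ H, ∃ α : F, b u x = a + α • x := by
    intro u hu
    have hmem : b u x ∈ H ⊔ Submodule.span F {x} := by
      apply hH (Submodule.span F {x})
      exact Submodule.mem_sup_left
        (Submodule.subset_span ⟨u, hu, x, Submodule.mem_span_singleton_self x, rfl⟩)
    rcases Submodule.mem_sup.mp hmem with ⟨a, ha, z, hz, hsum⟩
    rcases Submodule.mem_span_singleton.mp hz with ⟨α, rfl⟩
    exact ⟨a, ha, α, hsum.symm⟩
  have smul_zero_of_mem : ∀ α : F, α • x ∈ H → α = 0 := by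
    intro α hαx
    by_contra hne
    apply hx
    have := H.smul_mem α⁻¹ hαx
    rwa [smul_smul, inv_mul_cancel₀ hne, one_smul] at this
  obtain ⟨a, ha, α, eq1⟩ := key h hh
  have hh2 : b h h ∈ H := hHH h hh h hh
  -- b (b h x) h ∈ H
  have hbhxh : b (b h x) h ∈ H := by
    rw [eq1]
    simp only [map_add, map_smul, LinearMap.add_apply, LinearMap.smul_apply]
    exact H.add_mem (hHH a ha h hh) (H.smul_mem α hxh)
  -- Step A: from Leibniz (h, x, h), get b (b h h) x ∈ H
  have lebA := hb h x h
  have hA : b (b h h) x ∈ H := by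
    have e : b (b h h) x = b (b h x) h - b h (b x h) := by rw [lebA]; abel
    rw [e]
    exact H.sub_mem hbhxh (hHH h hh _ hxh)
  -- Step B: from Leibniz (h, h, x), get (α * α) • x ∈ H, hence α = 0
  have lebB := hb h h x
  have hlhsB : b h (b h x) = b h a + α • a + (α * α) • x := by
    conv_lhs => rw [eq1]
    rw [map_add, map_smul, eq1]
    simp only [smul_add, smul_smul]
    abel
  have hsq : (α * α) • x ∈ H := by
    have e : (α * α) • x = (b (b h h) x - b (b h x) h) - b h a - α • a := by
      rw [← lebB, hlhsB]; abel
    rw [e]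
    exact H.sub_mem (H.sub_mem (H.sub_mem hA hbhxh) (hHH h hh a ha)) (H.smul_mem α ha)
  have hα : α = 0 := by
    have := smul_zero_of_mem _ hsq
    rcases mul_eq_zero.mp this with h0 | h0 <;> exact h0
  rw [eq1, hα, zero_smul, add_zero]
  exact ha
end

section
/- If H is a quasi-ideal of a Leibniz algebra L over a field F, then [L,[H,H]] + [[H,H],L] ⊆ H. -/
variable {F L : Type*} [Field F] [AddCommGroup L] [Module F L]

/-- If `H` is a quasi-ideal of a Leibniz algebra `L` over a field `F`,
then `[L,[H,H]] + [[H,H],L] ⊆ H`. -/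
theorem bracket_derived_le_of_quasiIdeal (b : L →ₗ[F] L →ₗ[F] L) (hb : IsLeibniz b)
    (H : Submodule F L) (hH : IsQuasiIdeal b H) :
    bspan b ⊤ (bspan b H H) ⊔ bspan b (bspan b H H) ⊤ ≤ H := by
  have hHH : bspan b H H ≤ H := by
    have := hH H
    rwa [sup_idem, sup_idem] at this
  have hbr : ∀ a ∈ H, ∀ c ∈ H, b a c ∈ H := fun a ha c hc =>
    hHH (Submodule.subset_span ⟨a, ha, c, hc, rfl⟩)
  have hzero : ∀ z a c : L, b z (b a c + b c a) = 0 := by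
    intro z a c
    rw [map_add, hb z a c, hb z c a]; abel
  have key : ∀ (x h k : L), h ∈ H → k ∈ H → b x (b h k) ∈ H ∧ b (b h k) x ∈ H := by
    intro x h k hh hk
    by_cases hx : x ∈ H
    · exact ⟨hbr x hx _ (hbr h hh k hk), hbr _ (hbr h hh k hk) x hx⟩
    have hdecR : ∀ a ∈ H, ∃ a₁ ∈ H, ∃ c : F, b a x = a₁ + c • x := by
      intro a ha
      have h1 : b a x ∈ bspan b H (Submodule.span F {x}) :=
        Submodule.subset_span ⟨a, ha, x, Submodule.mem_span_singleton_self x, rfl⟩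
      have h2 := hH (Submodule.span F {x}) (Submodule.mem_sup_left h1)
      obtain ⟨a₁, ha₁, z, hz, hsum⟩ := Submodule.mem_sup.mp h2
      obtain ⟨c, rfl⟩ := Submodule.mem_span_singleton.mp hz
      exact ⟨a₁, ha₁, c, hsum.symm⟩
    have hdecL : ∀ a ∈ H, ∃ a₂ ∈ H, ∃ d : F, b x a = a₂ + d • x := by
      intro a ha
      have h1 : b x a ∈ bspan b (Submodule.span F {x}) H :=
        Submodule.subset_span ⟨x, Submodule.mem_span_singleton_self x, a, ha, rfl⟩
      have h2 := hH (Submodule.span F {x}) (Submodule.mem_sup_right h1)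
      obtain ⟨a₂, ha₂, z, hz, hsum⟩ := Submodule.mem_sup.mp h2
      obtain ⟨d, rfl⟩ := Submodule.mem_span_singleton.mp hz
      exact ⟨a₂, ha₂, d, hsum.symm⟩
    obtain ⟨h₁, hh₁, lh, eh1⟩ := hdecR h hh
    obtain ⟨h₂, hh₂, mh, eh2⟩ := hdecL h hh
    obtain ⟨k₁, hk₁, lk, ek1⟩ := hdecR k hk
    obtain ⟨k₂, hk₂, mk, ek2⟩ := hdecL k hk
    constructor
    · have e1 : b x (b h k) = b h₂ k + mh • k₂ - b k₂ h - mk • h₂ := by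
        rw [hb x h k]
        simp only [eh2, ek2, map_add, map_smul, LinearMap.add_apply,
          LinearMap.smul_apply]
        module
      rw [e1]
      exact sub_mem (sub_mem (add_mem (hbr h₂ hh₂ k hk) (H.smul_mem mh hk₂))
        (hbr k₂ hk₂ h hh)) (H.smul_mem mk hh₂)
    · have hcoef : lh * (lk + mk) = 0 := by
        by_cases ht : lk + mk = 0
        · rw [ht, mul_zero]
        · have hxeq : x = (lk + mk)⁻¹ • ((b k x + b x k) - (k₁ + k₂)) := by
            have : (b k x + b x k) - (k₁ + k₂) = (lk + mk) • x := by
              rw [ek1, ek2]; module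
            rw [this, smul_smul, inv_mul_cancel₀ ht, one_smul]
          have hbx : b h x ∈ H := by
            rw [hxeq, map_smul, map_sub, hzero h k x, zero_sub]
            exact H.smul_mem _ (H.neg_mem (hbr h hh _ (H.add_mem hk₁ hk₂)))
          have hlx : lh • x ∈ H := by
            have : lh • x = b h x - h₁ := by rw [eh1]; abel
            rw [this]
            exact sub_mem hbx hh₁
          have hlh : lh = 0 := by
            by_contra hlh
            exact hx (by
              have := H.smul_mem lh⁻¹ hlx
              rwa [smul_smul, inv_mul_cancel₀ hlh, one_smul] at this)
          rw [hlh, zero_mul]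
      have e3 : b (b h k) x =
          b h k₁ + lk • h₁ + b h₁ k + lh • k₂ + (lh * (lk + mk)) • x := by
        have e2 : b (b h k) x = b h (b k x) + b (b h x) k := by
          rw [hb h k x]; abel
        rw [e2]
        simp only [eh1, ek1, ek2, map_add, map_smul, LinearMap.add_apply,
          LinearMap.smul_apply]
        module
      rw [e3, hcoef, zero_smul, add_zero]
      exact add_mem (add_mem (add_mem (hbr h hh k₁ hk₁) (H.smul_mem lk hh₁))
        (hbr h₁ hh₁ k hk)) (H.smul_mem lh hk₂)
  refine sup_le ?_ ?_
  · rw [bspan, Submodule.span_le]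
    rintro z ⟨a, -, c, hc, rfl⟩
    induction hc using Submodule.span_induction with
    | mem w hw =>
      obtain ⟨h, hh, k, hk, rfl⟩ := hw
      exact (key a h k hh hk).1
    | zero => simp
    | add u v _ _ ihu ihv => rw [map_add]; exact add_mem ihu ihv
    | smul t u _ ihu => rw [map_smul]; exact H.smul_mem t ihu
  · rw [bspan, Submodule.span_le]
    rintro z ⟨c, hc, a, -, rfl⟩
    induction hc using Submodule.span_induction with
    | mem w hw =>
      obtain ⟨h, hh, k, hk, rfl⟩ := hw
      exact (key a h k hh hk).2
    | zero => simp
    | add u v _ _ ihu ihv =>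
      rw [map_add, LinearMap.add_apply]; exact add_mem ihu ihv
    | smul t u _ ihu =>
      rw [map_smul, LinearMap.smul_apply]; exact H.smul_mem t ihu
end

section
/- If H is an m-step subquasi-ideal of a Leibniz algebra L over a field F, then [L,(H²)^m] + [(H²)^m,L] ⊆ H, where H² = [H,H] and (H²)^m is the m-th term of the lower central series of the subalgebra H². -/
variable {F L : Type*} [Field F] [AddCommGroup L] [Module F L]


section AuxProof

variable {F L : Type*} [Field F] [AddCommGroup L] [Module F L]

private lemma mem_bspan' (b : L →ₗ[F] L →ₗ[F] L) {A C : Submodule F L} {a c : L}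
    (ha : a ∈ A) (hc : c ∈ C) : b a c ∈ bspan b A C :=
  Submodule.subset_span ⟨a, ha, c, hc, rfl⟩

private lemma bspan_mono' (b : L →ₗ[F] L →ₗ[F] L) {A A' C C' : Submodule F L}
    (h1 : A ≤ A') (h2 : C ≤ C') : bspan b A C ≤ bspan b A' C' := by
  apply Submodule.span_mono
  rintro z ⟨a, ha, c, hc, rfl⟩
  exact ⟨a, h1 ha, c, h2 hc, rfl⟩

/-- Core quasi-ideal computation: if `D` is a subalgebra that is a quasi-ideal
in `E`, then for every `x ∈ E` and `c ∈ [D,D]` we have `[x,c], [c,x] ∈ D`. -/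
private lemma quasi_step (b : L →ₗ[F] L →ₗ[F] L) (hb : IsLeibniz b)
    {D E : Submodule F L} (hD : IsSubalgebra b D)
    (hq : ∀ K : Submodule F L, K ≤ E → bspan b D K ⊔ bspan b K D ≤ D ⊔ K)
    {x : L} (hx : x ∈ E) {c : L} (hc : c ∈ bspan b D D) :
    b x c ∈ D ∧ b c x ∈ D := by
  have hDD : ∀ u ∈ D, ∀ v ∈ D, b u v ∈ D := fun u hu v hv => hD (mem_bspan' b hu hv)
  have hxK : Submodule.span F {x} ≤ E := by
    rwa [Submodule.span_singleton_le_iff_mem]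
  have hq' := hq _ hxK
  have decompR : ∀ v ∈ D, ∃ d ∈ D, ∃ α : F, b v x = d + α • x := by
    intro v hv
    have h1 : b v x ∈ D ⊔ Submodule.span F {x} :=
      hq' (Submodule.mem_sup_left
        (mem_bspan' b hv (Submodule.mem_span_singleton_self x)))
    obtain ⟨d, hd, z, hz, hsum⟩ := Submodule.mem_sup.mp h1
    obtain ⟨α, rfl⟩ := Submodule.mem_span_singleton.mp hz
    exact ⟨d, hd, α, hsum.symm⟩
  have decompL : ∀ v ∈ D, ∃ d ∈ D, ∃ α : F, b x v = d + α • x := by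
    intro v hv
    have h1 : b x v ∈ D ⊔ Submodule.span F {x} :=
      hq' (Submodule.mem_sup_right
        (mem_bspan' b (Submodule.mem_span_singleton_self x) hv))
    obtain ⟨d, hd, z, hz, hsum⟩ := Submodule.mem_sup.mp h1
    obtain ⟨α, rfl⟩ := Submodule.mem_span_singleton.mp hz
    exact ⟨d, hd, α, hsum.symm⟩
  suffices hsuff : bspan b D D ≤ Submodule.comap (b x) D ⊓ Submodule.comap (b.flip x) D by
    have h := hsuff hc
    exact ⟨h.1, h.2⟩
  apply Submodule.span_le.mpr
  rintro z ⟨a, ha, c', hc', rfl⟩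
  obtain ⟨da, hda, αa, Ha⟩ := decompR a ha
  obtain ⟨da', hda', βa, Ha'⟩ := decompL a ha
  obtain ⟨dc', hdc', βc, Hc'⟩ := decompL c' hc'
  have e1 : b x (b a c') = b da' c' + βa • dc' - b dc' a - βc • da' := by
    calc b x (b a c') = b (b x a) c' - b (b x c') a := hb x a c'
      _ = b (da' + βa • x) c' - b (dc' + βc • x) a := by rw [Ha', Hc']
      _ = (b da' c' + βa • (b x c')) - (b dc' a + βc • (b x a)) := by
          simp [map_add, map_smul, LinearMap.add_apply, LinearMap.smul_apply]
      _ = (b da' c' + βa • (dc' + βc • x)) - (b dc' a + βc • (da' + βa • x)) := by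
          rw [Ha', Hc']
      _ = b da' c' + βa • dc' - b dc' a - βc • da' := by module
  have e2 : b (b a c') x = b da c' + αa • dc' - b a dc' - βc • da := by
    have hLb := hb a x c'
    calc b (b a c') x = b (b a x) c' - b a (b x c') := by rw [hLb]; abel
      _ = b (da + αa • x) c' - b a (dc' + βc • x) := by rw [Ha, Hc']
      _ = (b da c' + αa • (b x c')) - (b a dc' + βc • (b a x)) := by
          simp [map_add, map_smul, LinearMap.add_apply, LinearMap.smul_apply]
      _ = (b da c' + αa • (dc' + βc • x)) - (b a dc' + βc • (da + αa • x)) := by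
          rw [Ha, Hc']
      _ = b da c' + αa • dc' - b a dc' - βc • da := by module
  refine Submodule.mem_inf.mpr ⟨?_, ?_⟩
  · simp only [Submodule.mem_comap]
    rw [e1]
    exact sub_mem (sub_mem (add_mem (hDD _ hda' _ hc') (Submodule.smul_mem _ _ hdc'))
      (hDD _ hdc' _ ha)) (Submodule.smul_mem _ _ hda')
  · simp only [Submodule.mem_comap, LinearMap.flip_apply]
    rw [e2]
    exact sub_mem (sub_mem (add_mem (hDD _ hda _ hc') (Submodule.smul_mem _ _ hdc'))
      (hDD _ ha _ hdc')) (Submodule.smul_mem _ _ hda)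

end AuxProof

/-- If `H` is an `m`-step subquasi-ideal of a Leibniz algebra `L`,
then `[L,(H²)^m] + [(H²)^m,L] ⊆ H`.  Here `(H²)^m = lowerCentral b (bspan b H H) (m-1)`. -/
theorem bracket_lcs_le_of_subquasiIdealSteps (b : L →ₗ[F] L →ₗ[F] L) (hb : IsLeibniz b)
    (m : ℕ) (hm : 1 ≤ m) (H : Submodule F L) (hH : IsSubquasiIdealSteps b m H) :
    bspan b ⊤ (lowerCentral b (bspan b H H) (m - 1)) ⊔
      bspan b (lowerCentral b (bspan b H H) (m - 1)) ⊤ ≤ H := by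
  obtain ⟨C, hC0, hCm, hsub, hqi⟩ := hH
  have hHle : ∀ i ≤ m, H ≤ C i := by
    intro i hi
    have key : ∀ j, i ≤ j → j ≤ m → C j ≤ C i := by
      intro j
      induction j with
      | zero => intro h _; rw [Nat.le_zero.mp h]
      | succ k ih =>
        intro h hk
        rcases Nat.eq_or_lt_of_le h with h' | h'
        · rw [h']
        · exact le_trans (hqi k (by omega)).1 (ih (by omega) (by omega))
    rw [← hCm]; exact key m hi le_rfl
  set D2 := bspan b H H with hD2
  have hbase : ∀ i, i + 1 ≤ m → ∀ x ∈ C i, ∀ c ∈ D2,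
      b x c ∈ C (i+1) ∧ b c x ∈ C (i+1) := by
    intro i hi x hx c hc
    have hcD : c ∈ bspan b (C (i+1)) (C (i+1)) :=
      bspan_mono' b (hHle _ hi) (hHle _ hi) hc
    exact quasi_step b hb (hsub (i+1) hi) (hqi i (by omega)).2 hx hcD
  have main : ∀ j i, i + j + 1 ≤ m → ∀ x ∈ C i, ∀ w ∈ lowerCentral b D2 j,
      b x w ∈ C (i+j+1) ∧ b w x ∈ C (i+j+1) := by
    intro j
    induction j with
    | zero => intro i hi x hx w hw; exact hbase i hi x hx w hw
    | succ k ih =>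
      intro i hi x hx w hw
      have key : lowerCentral b D2 (k+1) ≤
          Submodule.comap (b x) (C (i+k+2)) ⊓ Submodule.comap (b.flip x) (C (i+k+2)) := by
        show bspan b (lowerCentral b D2 k) D2 ≤ _
        apply Submodule.span_le.mpr
        rintro z ⟨u, hu, c, hc, rfl⟩
        have h1 : b x u ∈ C (i+k+1) := (ih i (by omega) x hx u hu).1
        have h2 : b (b x u) c ∈ C (i+k+2) := (hbase (i+k+1) (by omega) _ h1 c hc).1
        have h3 : b x c ∈ C (i+1) := (hbase i (by omega) x hx c hc).1
        have h4 : b (b x c) u ∈ C (i+1+k+1) := (ih (i+1) (by omega) _ h3 u hu).1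
        rw [show i+1+k+1 = i+k+2 from by omega] at h4
        have h5 : b c x ∈ C (i+1) := (hbase i (by omega) x hx c hc).2
        have h6 : b u (b c x) ∈ C (i+1+k+1) := (ih (i+1) (by omega) _ h5 u hu).2
        rw [show i+1+k+1 = i+k+2 from by omega] at h6
        have h7 : b u x ∈ C (i+k+1) := (ih i (by omega) x hx u hu).2
        have h8 : b (b u x) c ∈ C (i+k+2) := (hbase (i+k+1) (by omega) _ h7 c hc).1
        refine Submodule.mem_inf.mpr ⟨?_, ?_⟩
        · simp only [Submodule.mem_comap]
          rw [hb x u c]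
          exact sub_mem h2 h4
        · simp only [Submodule.mem_comap, LinearMap.flip_apply]
          have e : b (b u c) x = b u (b c x) + b (b u x) c := by
            rw [hb u c x]; abel
          rw [e]
          exact add_mem h6 h8
      have hres := key hw
      exact ⟨hres.1, hres.2⟩
  have harith : 0 + (m-1) + 1 = m := by omega
  apply sup_le
  · apply Submodule.span_le.mpr
    rintro z ⟨a, _, c, hc, rfl⟩
    have h := (main (m-1) 0 (by omega) a (by rw [hC0]; trivial) c hc).1
    rwa [harith, hCm] at h
  · apply Submodule.span_le.mpr
    rintro z ⟨c, hc, a, _, rfl⟩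
    have h := (main (m-1) 0 (by omega) a (by rw [hC0]; trivial) c hc).2
    rwa [harith, hCm] at h
end

section
/- Let H be a finite-dimensional solvable subquasi-ideal of a Leibniz algebra L over a field F whose core H_L is zero. Then [H,H] is nilpotent. Equivalently, a finite-dimensional solvable Leibniz algebra H with H² = [H,H] not nilpotent cannot be embedded as a core-free subquasi-ideal of any Leibniz algebra. -/
variable {F L : Type*} [Field F] [AddCommGroup L] [Module F L]

section AuxLemmas

variable {F L : Type*} [Field F] [AddCommGroup L] [Module F L]

namespace StmtNine

variable (b : L →ₗ[F] L →ₗ[F] L)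

theorem mem_bspan {A C : Submodule F L} {a c : L} (ha : a ∈ A) (hc : c ∈ C) :
    b a c ∈ bspan b A C :=
  Submodule.subset_span ⟨a, ha, c, hc, rfl⟩

theorem bspan_le_iff {A C X : Submodule F L} :
    bspan b A C ≤ X ↔ ∀ a ∈ A, ∀ c ∈ C, b a c ∈ X := by
  constructor
  · intro h a ha c hc; exact h (mem_bspan b ha hc)
  · intro h
    apply Submodule.span_le.2
    rintro z ⟨a, ha, c, hc, rfl⟩
    exact h a ha c hc

theorem bspan_mono {A A' C C' : Submodule F L} (h1 : A ≤ A') (h2 : C ≤ C') :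
    bspan b A C ≤ bspan b A' C' :=
  (bspan_le_iff b).2 fun a ha c hc => mem_bspan b (h1 ha) (h2 hc)

theorem bspan_sup_le {A B C : Submodule F L} :
    bspan b (A ⊔ B) C ≤ bspan b A C ⊔ bspan b B C := by
  refine (bspan_le_iff b).2 fun a ha c hc => ?_
  obtain ⟨a1, h1, a2, h2, rfl⟩ := Submodule.mem_sup.1 ha
  rw [map_add, LinearMap.add_apply]
  exact Submodule.add_mem_sup (mem_bspan b h1 hc) (mem_bspan b h2 hc)

/-- `[z,[w,w]] = 0`. -/
theorem bsq (hb : IsLeibniz b) (z w : L) : b z (b w w) = 0 := by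
  rw [hb]; exact sub_self _

/-- Left multiplications annihilate `[v,x]+[x,v]`. -/
theorem bsym (hb : IsLeibniz b) (z v x : L) : b z (b v x + b x v) = 0 := by
  have h : b v x + b x v = b (v + x) (v + x) - b v v - b x x := by
    simp only [map_add, LinearMap.add_apply]; abel
  rw [h, map_sub, map_sub, bsq b hb, bsq b hb, bsq b hb]; simp

variable {U : Submodule F L} {x : L}

/-- Lemma 1, right version: `[[u,v],x] ∈ U` for a quasi-ideal-like `U`. -/
theorem lem1R (hb : IsLeibniz b) (hU : bspan b U U ≤ U)
    (hq : ∀ u ∈ U, b u x ∈ U ⊔ Submodule.span F {x} ∧ b x u ∈ U ⊔ Submodule.span F {x})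
    {u v : L} (hu : u ∈ U) (hv : v ∈ U) : b (b u v) x ∈ U := by
  obtain ⟨u₁, hu₁, w, hw, hux⟩ := Submodule.mem_sup.1 (hq u hu).1
  obtain ⟨α, rfl⟩ := Submodule.mem_span_singleton.1 hw
  obtain ⟨v₁, hv₁, w, hw, hvx⟩ := Submodule.mem_sup.1 (hq v hv).1
  obtain ⟨γ, rfl⟩ := Submodule.mem_span_singleton.1 hw
  obtain ⟨v₂, hv₂, w, hw, hxv⟩ := Submodule.mem_sup.1 (hq v hv).2
  obtain ⟨δ, rfl⟩ := Submodule.mem_span_singleton.1 hw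
  have huv : b u v ∈ U := hU (mem_bspan b hu hv)
  by_cases hcase : γ + δ = 0
  · have e1 : b (b u v) x = b u (b v x) + b (b u x) v := by rw [hb u v x]; abel
    rw [e1, ← hvx, ← hux]
    have e2 : b u (v₁ + γ • x) + b (u₁ + α • x) v
        = b u v₁ + γ • (b u x) + (b u₁ v + α • (b x v)) := by
      simp only [map_add, map_smul, LinearMap.add_apply, LinearMap.smul_apply]
    rw [e2, ← hux, ← hxv]
    have hδ : δ = -γ := by linear_combination hcase
    subst hδ
    have e3 : b u v₁ + γ • (u₁ + α • x) + (b u₁ v + α • (v₂ + (-γ) • x))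
        = b u v₁ + γ • u₁ + b u₁ v + α • v₂ := by module
    rw [e3]
    exact add_mem (add_mem (add_mem (hU (mem_bspan b hu hv₁)) (Submodule.smul_mem _ _ hu₁))
      (hU (mem_bspan b hu₁ hv))) (Submodule.smul_mem _ _ hv₂)
  · have hs : b v x + b x v = (v₁ + v₂) + (γ + δ) • x := by
      rw [← hvx, ← hxv]; module
    have hx : x = (γ + δ)⁻¹ • ((b v x + b x v) - v₁ - v₂) := by
      rw [hs]
      have e : (v₁ + v₂ + (γ + δ) • x) - v₁ - v₂ = (γ + δ) • x := by abel
      rw [e, smul_smul, inv_mul_cancel₀ hcase, one_smul]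
    rw [hx, map_smul, map_sub, map_sub, bsym b hb]
    refine Submodule.smul_mem _ _ ?_
    exact sub_mem (sub_mem (Submodule.zero_mem U) (hU (mem_bspan b huv hv₁)))
      (hU (mem_bspan b huv hv₂))

/-- Lemma 1, left version: `[x,[u,v]] ∈ U`. -/
theorem lem1L (hb : IsLeibniz b) (hU : bspan b U U ≤ U)
    (hq : ∀ u ∈ U, b u x ∈ U ⊔ Submodule.span F {x} ∧ b x u ∈ U ⊔ Submodule.span F {x})
    {u v : L} (hu : u ∈ U) (hv : v ∈ U) : b x (b u v) ∈ U := by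
  obtain ⟨u₂, hu₂, w, hw, hxu⟩ := Submodule.mem_sup.1 (hq u hu).2
  obtain ⟨β, rfl⟩ := Submodule.mem_span_singleton.1 hw
  obtain ⟨v₂, hv₂, w, hw, hxv⟩ := Submodule.mem_sup.1 (hq v hv).2
  obtain ⟨δ, rfl⟩ := Submodule.mem_span_singleton.1 hw
  rw [hb x u v, ← hxu, ← hxv]
  have e : b (u₂ + β • x) v - b (v₂ + δ • x) u
      = b u₂ v - b v₂ u + β • (b x v) - δ • (b x u) := by
    simp only [map_add, map_smul, LinearMap.add_apply, LinearMap.smul_apply]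
    abel
  rw [e, ← hxv, ← hxu]
  have e2 : b u₂ v - b v₂ u + β • (v₂ + δ • x) - δ • (u₂ + β • x)
      = b u₂ v - b v₂ u + β • v₂ - δ • u₂ := by module
  rw [e2]
  exact sub_mem (add_mem (sub_mem (hU (mem_bspan b hu₂ hv)) (hU (mem_bspan b hv₂ hu)))
    (Submodule.smul_mem _ _ hv₂)) (Submodule.smul_mem _ _ hu₂)

theorem lem1R_span (hb : IsLeibniz b) (hU : bspan b U U ≤ U)
    (hq : ∀ u ∈ U, b u x ∈ U ⊔ Submodule.span F {x} ∧ b x u ∈ U ⊔ Submodule.span F {x})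
    {w : L} (hw : w ∈ bspan b U U) : b w x ∈ U := by
  have h : bspan b U U ≤ Submodule.comap (b.flip x) U := by
    apply Submodule.span_le.2
    rintro z ⟨u, hu, v, hv, rfl⟩
    simp only [SetLike.mem_coe, Submodule.mem_comap, LinearMap.flip_apply]
    exact lem1R b hb hU hq hu hv
  exact h hw

theorem lem1L_span (hb : IsLeibniz b) (hU : bspan b U U ≤ U)
    (hq : ∀ u ∈ U, b u x ∈ U ⊔ Submodule.span F {x} ∧ b x u ∈ U ⊔ Submodule.span F {x})
    {w : L} (hw : w ∈ bspan b U U) : b x w ∈ U := by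
  have h : bspan b U U ≤ Submodule.comap (b x) U := by
    apply Submodule.span_le.2
    rintro z ⟨u, hu, v, hv, rfl⟩
    simp only [SetLike.mem_coe, Submodule.mem_comap]
    exact lem1L b hb hU hq hu hv
  exact h hw

variable {K : Submodule F L}

theorem lc_le (hK : bspan b K K ≤ K) : ∀ n, lowerCentral b K n ≤ K
  | 0 => le_rfl
  | n + 1 => (bspan_mono b (lc_le hK n) le_rfl).trans hK

theorem lc_succ_le (hK : bspan b K K ≤ K) : ∀ n, lowerCentral b K (n+1) ≤ lowerCentral b K n
  | 0 => hK
  | n + 1 => bspan_mono b (lc_succ_le hK n) le_rfl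

theorem lc_bspan (hb : IsLeibniz b) :
    ∀ c a : ℕ, bspan b (lowerCentral b K a) (lowerCentral b K c) ≤ lowerCentral b K (a + c + 1) := by
  intro c
  induction c with
  | zero => intro a; exact le_rfl
  | succ c ih =>
    intro a
    refine (bspan_le_iff b).2 fun p hp w hw => ?_
    have h : lowerCentral b K (c+1) ≤ Submodule.comap (b p) (lowerCentral b K (a + (c+1) + 1)) := by
      apply Submodule.span_le.2
      rintro z ⟨q, hq, r, hr, rfl⟩
      simp only [SetLike.mem_coe, Submodule.mem_comap]
      rw [hb p q r]
      have m1 : b (b p q) r ∈ lowerCentral b K (a + c + 1 + 1) :=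
        mem_bspan b (ih a (mem_bspan b hp hq)) hr
      have m2 : b (b p r) q ∈ lowerCentral b K (a + 1 + c + 1) :=
        ih (a+1) (mem_bspan b (mem_bspan b hp hr) hq)
      have e1 : a + (c+1) + 1 = a + c + 1 + 1 := by omega
      have e2 : a + 1 + c + 1 = a + (c+1) + 1 := by omega
      rw [e1]
      rw [show a + 1 + c + 1 = a + c + 1 + 1 from by omega] at m2
      exact sub_mem m1 m2
    exact h hw

end StmtNine

/-- Iterated right bracketing with `K`. -/
def itK (b : L →ₗ[F] L →ₗ[F] L) (K X : Submodule F L) : ℕ → Submodule F L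
  | 0 => X
  | n + 1 => bspan b (itK b K X n) K

namespace StmtNine

variable (b : L →ₗ[F] L →ₗ[F] L)

theorem itK_shift (K X : Submodule F L) :
    ∀ n, itK b K X (n + 1) = itK b K (bspan b X K) n
  | 0 => rfl
  | n + 1 => by
    show bspan b (itK b K X (n+1)) K = bspan b (itK b K (bspan b X K) n) K
    rw [itK_shift K X n]

theorem itK_add (K X : Submodule F L) :
    ∀ a c : ℕ, itK b K X (a + c) = itK b K (itK b K X a) c
  | _, 0 => rfl
  | a, c + 1 => by
    show bspan b (itK b K X (a + c)) K = bspan b (itK b K (itK b K X a) c) K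
    rw [itK_add K X a c]

theorem lad3 (hK : bspan b K K ≤ K) :
    ∀ (s r : ℕ) (X : Submodule F L), X ≤ lowerCentral b K r →
      itK b K X s ≤ lowerCentral b K (r + s) := by
  intro s
  induction s with
  | zero => intro r X hX; exact hX
  | succ s ih =>
    intro r X hX
    show bspan b (itK b K X s) K ≤ lowerCentral b K (r + (s+1))
    have : r + (s + 1) = (r + s) + 1 := by omega
    rw [this]
    exact bspan_mono b (ih r X hX) le_rfl

theorem iter_le (V T : Submodule F L) (hVK : bspan b V K ≤ V)
    (hT : T ≤ V ⊔ bspan b T K) {j : ℕ} (hj : itK b K T j ≤ V) : T ≤ V := by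
  have c1 : ∀ n, itK b K T n ≤ V ⊔ itK b K T (n + 1) := by
    intro n
    induction n with
    | zero => exact hT
    | succ n ih =>
      show bspan b (itK b K T n) K ≤ V ⊔ itK b K T (n + 2)
      calc bspan b (itK b K T n) K
          ≤ bspan b (V ⊔ itK b K T (n+1)) K := bspan_mono b ih le_rfl
        _ ≤ bspan b V K ⊔ bspan b (itK b K T (n+1)) K := bspan_sup_le b
        _ ≤ V ⊔ itK b K T (n + 2) := sup_le_sup hVK le_rfl
  have c2 : ∀ n, T ≤ V ⊔ itK b K T n := by
    intro n
    induction n with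
    | zero => exact le_sup_right
    | succ n ih => exact ih.trans (sup_le le_sup_left (c1 n))
  exact (c2 j).trans (sup_le le_rfl hj)

end StmtNine

end AuxLemmas


open StmtNine

/-- Let `H` be a finite-dimensional solvable subquasi-ideal of a Leibniz
algebra `L` whose core `H_L` is zero. Then `[H,H]` is nilpotent. -/
theorem derived_nilpotent_of_corefree_subquasiIdeal (b : L →ₗ[F] L →ₗ[F] L)
    (hb : IsLeibniz b) (H : Submodule F L) (hfd : FiniteDimensional F H)
    (hsolv : ∃ n : ℕ, derSeries b H n = ⊥)
    (hH : IsSubquasiIdeal b H) (hcore : coreOf b H = ⊥) :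
    ∃ n : ℕ, lowerCentral b (bspan b H H) n = ⊥ := by
  classical
  obtain ⟨m, C, hC0, hCm, hsub, hqu⟩ := hH
  set K : Submodule F L := bspan b H H with hKdef
  have hKH : K ≤ H := by
    have h : bspan b (C m) (C m) ≤ C m := hsub m le_rfl
    rwa [hCm] at h
  -- the chain is decreasing and contains H
  have hchain : ∀ i < m, C (i+1) ≤ C i := fun i hi => (hqu i hi).1
  have hHC : ∀ i ≤ m, H ≤ C i := by
    have key : ∀ k, k ≤ m → H ≤ C (m - k) := by
      intro k
      induction k with
      | zero => intro _; rw [Nat.sub_zero, hCm]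
      | succ k ih =>
        intro hk
        have h1 : m - (k+1) < m := by omega
        have h2 : (m - (k+1)) + 1 = m - k := by omega
        have h3 := hchain (m - (k+1)) h1
        rw [h2] at h3
        exact (ih (by omega)).trans h3
    intro i hi
    have h3 : m - (m - i) = i := by omega
    have h4 := key (m - i) (by omega)
    rwa [h3] at h4
  -- left and right multiplications of H preserve K
  have hHK : ∀ y ∈ H, ∀ w ∈ K, b y w ∈ K := by
    intro y hy w hw
    have h : K ≤ Submodule.comap (b y) K := by
      apply Submodule.span_le.2
      rintro z ⟨u, hu, v, hv, rfl⟩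
      simp only [SetLike.mem_coe, Submodule.mem_comap]
      rw [hb y u v]
      exact sub_mem (mem_bspan b (hKH (mem_bspan b hy hu)) hv)
        (mem_bspan b (hKH (mem_bspan b hy hv)) hu)
    exact h hw
  have hKHr : ∀ w ∈ K, ∀ y ∈ H, b w y ∈ K := by
    intro w hw y hy
    have h : K ≤ Submodule.comap (b.flip y) K := by
      apply Submodule.span_le.2
      rintro z ⟨u, hu, v, hv, rfl⟩
      simp only [SetLike.mem_coe, Submodule.mem_comap, LinearMap.flip_apply]
      have e : b (b u v) y = b u (b v y) + b (b u y) v := by rw [hb u v y]; abel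
      rw [e]
      exact add_mem (mem_bspan b hu (hKH (mem_bspan b hv hy)))
        (mem_bspan b (hKH (mem_bspan b hu hy)) hv)
    exact h hw
  have hKsub : bspan b K K ≤ K := bspan_mono b hKH hKH
  -- stabilization of the lower central series of K
  have hLCle : ∀ n, lowerCentral b K n ≤ H := fun n => (lc_le b hKsub n).trans hKH
  have hstab : ∃ k, lowerCentral b K (k+1) = lowerCentral b K k := by
    by_contra hcon
    push_neg at hcon
    have hlt : ∀ n, lowerCentral b K (n+1) < lowerCentral b K n := fun n =>
      lt_of_le_of_ne (lc_succ_le b hKsub n) (hcon n)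
    have inst : ∀ n, FiniteDimensional F (lowerCentral b K n) := fun n =>
      Submodule.finiteDimensional_of_le (hLCle n)
    have hrank : ∀ n, Module.finrank F (lowerCentral b K (n+1))
        < Module.finrank F (lowerCentral b K n) := fun n =>
      haveI := inst n
      Submodule.finrank_lt_finrank_of_lt (hlt n)
    have hsum : ∀ n, Module.finrank F (lowerCentral b K n) + n
        ≤ Module.finrank F (lowerCentral b K 0) := by
      intro n
      induction n with
      | zero => simp
      | succ n ih => have := hrank n; omega
    have := hsum (Module.finrank F (lowerCentral b K 0) + 1)
    omega
  obtain ⟨k₀, hk₀⟩ := hstab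
  set V : Submodule F L := lowerCentral b K k₀ with hVdef
  have hVK_eq : bspan b V K = V := hk₀
  have hVle : V ≤ K := lc_le b hKsub k₀
  -- [K, V] ≤ V
  have hKV : bspan b K V ≤ V := by
    have h1 := lc_bspan b (K := K) hb k₀ 0
    have h2 : (0 : ℕ) + k₀ + 1 = k₀ + 1 := by omega
    rw [h2] at h1
    exact h1.trans hk₀.le
  -- pointwise quasi-ideal property
  have quasi_pt : ∀ i < m, ∀ x ∈ C i, ∀ u ∈ C (i+1),
      b u x ∈ C (i+1) ⊔ Submodule.span F {x} ∧ b x u ∈ C (i+1) ⊔ Submodule.span F {x} := by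
    intro i hi x hx u hu
    have hsp : Submodule.span F {x} ≤ C i := (Submodule.span_singleton_le_iff_mem x _).2 hx
    have h := (hqu i hi).2 (Submodule.span F {x}) hsp
    have hxx : x ∈ Submodule.span F {x} := Submodule.mem_span_singleton_self x
    exact ⟨h (Submodule.mem_sup_left (mem_bspan b hu hxx)),
      h (Submodule.mem_sup_right (mem_bspan b hxx hu))⟩
  have lem1R' : ∀ i < m, ∀ x ∈ C i, ∀ w ∈ bspan b (C (i+1)) (C (i+1)), b w x ∈ C (i+1) :=
    fun i hi x hx w hw =>
      lem1R_span b hb (hsub (i+1) (by omega)) (quasi_pt i hi x hx) hw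
  have lem1L' : ∀ i < m, ∀ x ∈ C i, ∀ w ∈ bspan b (C (i+1)) (C (i+1)), b x w ∈ C (i+1) :=
    fun i hi x hx w hw =>
      lem1L_span b hb (hsub (i+1) (by omega)) (quasi_pt i hi x hx) hw
  have hKC : ∀ i, i + 1 ≤ m → K ≤ bspan b (C (i+1)) (C (i+1)) := fun i hi =>
    bspan_mono b (hHC _ hi) (hHC _ hi)
  -- ladder: starting below C q, iterating lands in H
  have lad1 : ∀ (r q : ℕ) (X : Submodule F L), q + r = m → X ≤ C q → itK b K X r ≤ H := by
    intro r
    induction r with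
    | zero =>
      intro q X hq hX
      have : q = m := by omega
      subst this
      exact hX.trans hCm.le
    | succ r ih =>
      intro q X hq hX
      rw [itK_shift]
      apply ih (q+1) _ (by omega)
      refine (bspan_le_iff b).2 fun y hy a ha => ?_
      exact lem1L' q (by omega) y (hX hy) a (hKC q (by omega) ha)
  -- full ladder into V
  have ladVK : ∀ X : Submodule F L, X ≤ K → itK b K X k₀ ≤ V := by
    intro X hX
    have h := lad3 b hKsub k₀ 0 X hX
    rwa [Nat.zero_add] at h
  have ladV : ∀ (X : Submodule F L) (i : ℕ), i + 1 ≤ m → X ≤ C (i+1) →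
      itK b K X ((m - (i+1)) + (1 + k₀)) ≤ V := by
    intro X i hi hX
    rw [itK_add]
    have h1 : itK b K X (m - (i+1)) ≤ H := lad1 (m - (i+1)) (i+1) X (by omega) hX
    have e : (1 : ℕ) + k₀ = k₀ + 1 := by omega
    rw [e, itK_shift]
    apply ladVK
    exact (bspan_le_iff b).2 fun y hy a ha => hHK y (h1 hy) a ha
  -- main downward induction
  have main : ∀ j, bspan b V (C (m - j)) ≤ V ∧ bspan b (C (m - j)) V ≤ V := by
    intro j
    induction j with
    | zero =>
      rw [Nat.sub_zero, hCm]
      constructor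
      · refine (bspan_le_iff b).2 fun v hv x hx => ?_
        set T := Submodule.map (b.flip x) V with hTdef
        have hT1 : T ≤ K := by
          rw [Submodule.map_le_iff_le_comap]
          intro v' hv'
          simp only [Submodule.mem_comap, LinearMap.flip_apply]
          exact hKHr v' (hVle hv') x hx
        have hT2 : T ≤ V ⊔ bspan b T K := by
          rw [Submodule.map_le_iff_le_comap]
          intro v' hv'
          rw [← hVK_eq] at hv'
          have h : bspan b V K ≤ Submodule.comap (b.flip x) (V ⊔ bspan b T K) := by
            apply Submodule.span_le.2
            rintro z ⟨v'', hv'', a, ha, rfl⟩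
            simp only [SetLike.mem_coe, Submodule.mem_comap, LinearMap.flip_apply]
            have e : b (b v'' a) x = b v'' (b a x) + b (b v'' x) a := by
              rw [hb v'' a x]; abel
            rw [e]
            have m1 : b v'' (b a x) ∈ V := by
              have : b a x ∈ K := hKHr a ha x hx
              exact hVK_eq ▸ (mem_bspan b hv'' this)
            have m2 : b (b v'' x) a ∈ bspan b T K :=
              mem_bspan b (Submodule.mem_map_of_mem hv'') ha
            exact Submodule.add_mem_sup m1 m2
          exact h hv'
        have hT3 : itK b K T k₀ ≤ V := ladVK T hT1
        have hTV : T ≤ V := iter_le b V T hVK_eq.le hT2 hT3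
        exact hTV (Submodule.mem_map_of_mem hv)
      · refine (bspan_le_iff b).2 fun x hx v hv => ?_
        set S := Submodule.map (b x) V with hSdef
        have hS1 : S ≤ K := by
          rw [Submodule.map_le_iff_le_comap]
          intro v' hv'
          simp only [Submodule.mem_comap]
          exact hHK x hx v' (hVle hv')
        have hS2 : S ≤ V ⊔ bspan b S K := by
          rw [Submodule.map_le_iff_le_comap]
          intro v' hv'
          rw [← hVK_eq] at hv'
          have h : bspan b V K ≤ Submodule.comap (b x) (V ⊔ bspan b S K) := by
            apply Submodule.span_le.2
            rintro z ⟨v'', hv'', a, ha, rfl⟩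
            simp only [SetLike.mem_coe, Submodule.mem_comap]
            rw [hb x v'' a]
            have m1 : b (b x a) v'' ∈ V := by
              have : b x a ∈ K := hHK x hx a ha
              exact hKV (mem_bspan b this hv'')
            have m2 : b (b x v'') a ∈ bspan b S K :=
              mem_bspan b (Submodule.mem_map_of_mem hv'') ha
            exact sub_mem (Submodule.mem_sup_right m2) (Submodule.mem_sup_left m1)
          exact h hv'
        have hS3 : itK b K S k₀ ≤ V := ladVK S hS1
        have hSV : S ≤ V := iter_le b V S hVK_eq.le hS2 hS3
        exact hSV (Submodule.mem_map_of_mem hv)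
    | succ j ihj =>
      by_cases hjm : j + 1 ≤ m
      · have hi_lt : m - (j+1) < m := by omega
        have hi1 : (m - (j+1)) + 1 = m - j := by omega
        rw [← hi1] at ihj
        obtain ⟨ih1, ih2⟩ := ihj
        set i := m - (j+1) with hidef
        have hVC : V ≤ bspan b (C (i+1)) (C (i+1)) := hVle.trans (hKC i (by omega))
        constructor
        · refine (bspan_le_iff b).2 fun v hv x hx => ?_
          set T := Submodule.map (b.flip x) V with hTdef
          have hT1 : T ≤ C (i+1) := by
            rw [Submodule.map_le_iff_le_comap]
            intro v' hv'
            simp only [Submodule.mem_comap, LinearMap.flip_apply]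
            exact lem1R' i hi_lt x hx v' (hVC hv')
          have hT2 : T ≤ V ⊔ bspan b T K := by
            rw [Submodule.map_le_iff_le_comap]
            intro v' hv'
            rw [← hVK_eq] at hv'
            have h : bspan b V K ≤ Submodule.comap (b.flip x) (V ⊔ bspan b T K) := by
              apply Submodule.span_le.2
              rintro z ⟨v'', hv'', a, ha, rfl⟩
              simp only [SetLike.mem_coe, Submodule.mem_comap, LinearMap.flip_apply]
              have e : b (b v'' a) x = b v'' (b a x) + b (b v'' x) a := by
                rw [hb v'' a x]; abel
              rw [e]
              have m1 : b v'' (b a x) ∈ V := by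
                have hax : b a x ∈ C (i+1) := lem1R' i hi_lt x hx a (hKC i (by omega) ha)
                exact ih1 (mem_bspan b hv'' hax)
              have m2 : b (b v'' x) a ∈ bspan b T K :=
                mem_bspan b (Submodule.mem_map_of_mem hv'') ha
              exact Submodule.add_mem_sup m1 m2
            exact h hv'
          have hT3 : itK b K T ((m - (i+1)) + (1 + k₀)) ≤ V := ladV T i (by omega) hT1
          have hTV : T ≤ V := iter_le b V T hVK_eq.le hT2 hT3
          exact hTV (Submodule.mem_map_of_mem hv)
        · refine (bspan_le_iff b).2 fun x hx v hv => ?_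
          set S := Submodule.map (b x) V with hSdef
          have hS1 : S ≤ C (i+1) := by
            rw [Submodule.map_le_iff_le_comap]
            intro v' hv'
            simp only [Submodule.mem_comap]
            exact lem1L' i hi_lt x hx v' (hVC hv')
          have hS2 : S ≤ V ⊔ bspan b S K := by
            rw [Submodule.map_le_iff_le_comap]
            intro v' hv'
            rw [← hVK_eq] at hv'
            have h : bspan b V K ≤ Submodule.comap (b x) (V ⊔ bspan b S K) := by
              apply Submodule.span_le.2
              rintro z ⟨v'', hv'', a, ha, rfl⟩
              simp only [SetLike.mem_coe, Submodule.mem_comap]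
              rw [hb x v'' a]
              have m1 : b (b x a) v'' ∈ V := by
                have hax : b x a ∈ C (i+1) := lem1L' i hi_lt x hx a (hKC i (by omega) ha)
                exact ih2 (mem_bspan b hax hv'')
              have m2 : b (b x v'') a ∈ bspan b S K :=
                mem_bspan b (Submodule.mem_map_of_mem hv'') ha
              exact sub_mem (Submodule.mem_sup_right m2) (Submodule.mem_sup_left m1)
            exact h hv'
          have hS3 : itK b K S ((m - (i+1)) + (1 + k₀)) ≤ V := ladV S i (by omega) hS1
          have hSV : S ≤ V := iter_le b V S hVK_eq.le hS2 hS3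
          exact hSV (Submodule.mem_map_of_mem hv)
      · have : m - (j+1) = m - j := by omega
        rw [this]
        exact ihj
  -- conclude: V is an ideal of L contained in H, hence V = 0
  have hfinal := main m
  rw [Nat.sub_self, hC0] at hfinal
  have hideal : IsIdeal b V := sup_le hfinal.1 hfinal.2
  have hVH : V ≤ H := hVle.trans hKH
  have hVcore : V ≤ coreOf b H := le_sSup ⟨hideal, hVH⟩
  rw [hcore] at hVcore
  exact ⟨k₀, le_bot_iff.1 hVcore⟩
end

section
/- If H is a quasi-ideal of a Leibniz algebra L over a field F which is generated as a subalgebra by left Engel elements of L, then H is an ideal of L. -/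
variable {F L : Type*} [Field F] [AddCommGroup L] [Module F L]

/-!
Testing the quasi-ideal condition against the line `F ∙ z` gives `[h, z] = h' + c • z` and
`[z, h] = h' + c • z` with `h' ∈ H`. For a left Engel generator `x`, iterating `R_x` on
`z` yields `R_x^n z ≡ c^n • z` modulo `H`, so `c = 0` or `z ∈ H`; either way `[z, x] ∈ H`.
The elements `w ∈ H` with `[L, w] ⊆ H` form a subalgebra by the Leibniz identity, so they
exhaust `H`. Finally, the Leibniz identity gives `[h, [h, z]] = -[h, [z, h]] ∈ H`, which
forces `c² • z ∈ H` for `[h, z] = h' + c • z`, whence `[H, L] ⊆ H` as well.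
-/

section Leibniz

variable {b : L →ₗ[F] L →ₗ[F] L} {H : Submodule F L}

theorem bspan_le_iff {A C D : Submodule F L} :
    bspan b A C ≤ D ↔ ∀ a ∈ A, ∀ c ∈ C, b a c ∈ D := by
  refine Submodule.span_le.trans ⟨fun h a ha c hc => h ⟨a, ha, c, hc, rfl⟩, ?_⟩
  rintro h _ ⟨a, ha, c, hc, rfl⟩
  exact h a ha c hc

theorem isSubalgebra_iff : IsSubalgebra b H ↔ ∀ a ∈ H, ∀ c ∈ H, b a c ∈ H :=
  bspan_le_iff

theorem isIdeal_iff :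
    IsIdeal b H ↔ (∀ h ∈ H, ∀ z, b h z ∈ H) ∧ ∀ h ∈ H, ∀ z, b z h ∈ H := by
  simp only [IsIdeal, sup_le_iff, bspan_le_iff, Submodule.mem_top, forall_const]
  exact and_congr_right' ⟨fun h a ha z => h z a ha, fun h z a ha => h a ha z⟩

theorem subset_subalgGen (S : Set L) : S ⊆ subalgGen b S :=
  fun _ hx => Submodule.mem_sInf.2 fun _ hK => hK.2 hx

theorem subalgGen_le {S : Set L} {K : Submodule F L} (hK : IsSubalgebra b K)
    (hSK : S ⊆ K) : subalgGen b S ≤ K :=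
  sInf_le ⟨hK, hSK⟩

theorem isSubalgebra_subalgGen (S : Set L) : IsSubalgebra b (subalgGen b S) :=
  isSubalgebra_iff.2 fun _ ha _ hc => Submodule.mem_sInf.2 fun K hK =>
    isSubalgebra_iff.1 hK.1 _ (Submodule.mem_sInf.1 ha K hK) _ (Submodule.mem_sInf.1 hc K hK)

theorem IsLeibniz.bracket_bracket_add_bracket_bracket_swap (hb : IsLeibniz b) (x y z : L) :
    b x (b y z) + b x (b z y) = 0 := by
  rw [hb x y z, hb x z y]
  abel

theorem exists_eq_add_smul_of_mem_sup_span_singleton {y z : L}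
    (hy : y ∈ H ⊔ F ∙ z) : ∃ h ∈ H, ∃ c : F, y = h + c • z := by
  obtain ⟨h, hh, _, hw, rfl⟩ := Submodule.mem_sup.1 hy
  obtain ⟨c, rfl⟩ := Submodule.mem_span_singleton.1 hw
  exact ⟨h, hh, c, rfl⟩

namespace IsQuasiIdeal

theorem exists_bracket_right_eq (hH : IsQuasiIdeal b H) {h : L} (hh : h ∈ H) (z : L) :
    ∃ h' ∈ H, ∃ c : F, b h z = h' + c • z :=
  exists_eq_add_smul_of_mem_sup_span_singleton <|
    hH _ <| le_sup_left (a := bspan b H _) <|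
      Submodule.subset_span ⟨h, hh, z, Submodule.mem_span_singleton_self z, rfl⟩

theorem exists_bracket_left_eq (hH : IsQuasiIdeal b H) {h : L} (hh : h ∈ H) (z : L) :
    ∃ h' ∈ H, ∃ c : F, b z h = h' + c • z :=
  exists_eq_add_smul_of_mem_sup_span_singleton <|
    hH _ <| le_sup_right (b := bspan b _ H) <|
      Submodule.subset_span ⟨z, Submodule.mem_span_singleton_self z, h, hh, rfl⟩

theorem bracket_left_mem_of_isLeftEngel (hH : IsQuasiIdeal b H) (hsub : IsSubalgebra b H)
    {x : L} (hx : x ∈ H) (hengel : IsLeftEngel b x) (z : L) : b z x ∈ H := by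
  obtain ⟨h', hh', c, hc⟩ := hH.exists_bracket_left_eq hx z
  have hpow : ∀ n : ℕ, ((b.flip x) ^ n) z - c ^ n • z ∈ H := by
    intro n
    induction n with
    | zero => simp
    | succ n ih =>
      have hstep : ((b.flip x) ^ (n + 1)) z - c ^ (n + 1) • z =
          b (((b.flip x) ^ n) z - c ^ n • z) x + c ^ n • h' := by
        rw [pow_succ', Module.End.mul_apply, LinearMap.flip_apply, map_sub, map_smul,
          LinearMap.sub_apply, LinearMap.smul_apply, hc]
        module
      rw [hstep]
      exact H.add_mem (isSubalgebra_iff.1 hsub _ ih x hx) (H.smul_mem _ hh')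
  by_cases hc0 : c = 0
  · simpa [hc, hc0] using hh'
  obtain ⟨n, hn⟩ := hengel z
  have hz : z ∈ H := by
    have := H.neg_mem (hpow n)
    rwa [hn, zero_sub, neg_neg, H.smul_mem_iff (pow_ne_zero n hc0)] at this
  rw [hc]
  exact H.add_mem hh' (H.smul_mem c hz)

theorem bracket_right_mem (hb : IsLeibniz b) (hH : IsQuasiIdeal b H)
    (hleft : ∀ h ∈ H, ∀ z, b z h ∈ H) {h : L} (hh : h ∈ H) (z : L) : b h z ∈ H := by
  obtain ⟨h', hh', c, hc⟩ := hH.exists_bracket_right_eq hh z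
  have hhhz : b h (b h z) ∈ H := by
    rw [eq_neg_iff_add_eq_zero.2 (hb.bracket_bracket_add_bracket_bracket_swap h h z)]
    exact H.neg_mem (hleft _ (hleft h hh z) h)
  by_cases hc0 : c = 0
  · simpa [hc, hc0] using hh'
  have hz : z ∈ H := by
    have hsq : (c * c) • z = b h (b h z) - b h h' - c • h' := by
      rw [hc, map_add, map_smul, hc, smul_add, mul_smul]
      abel
    rw [← H.smul_mem_iff (mul_ne_zero hc0 hc0), hsq]
    exact H.sub_mem (H.sub_mem hhhz (hleft h' hh' h)) (H.smul_mem c hh')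
  rw [hc]
  exact H.add_mem hh' (H.smul_mem c hz)

end IsQuasiIdeal

theorem IsSubalgebra.isSubalgebra_inf_iInf_comap (hb : IsLeibniz b) (hH : IsSubalgebra b H) :
    IsSubalgebra b (H ⊓ ⨅ z, H.comap (b z)) := by
  simp only [isSubalgebra_iff, Submodule.mem_inf, Submodule.mem_iInf, Submodule.mem_comap]
  rintro a ⟨haH, ha⟩ c ⟨hcH, hc⟩
  refine ⟨isSubalgebra_iff.1 hH a haH c hcH, fun z => ?_⟩
  rw [hb z a c]
  exact H.sub_mem (isSubalgebra_iff.1 hH _ (ha z) c hcH)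
    (isSubalgebra_iff.1 hH _ (hc z) a haH)

theorem bracket_mem_subalgGen_of_forall_mem (hb : IsLeibniz b) {S : Set L}
    (hS : ∀ x ∈ S, ∀ z, b z x ∈ subalgGen b S) {h : L} (hh : h ∈ subalgGen b S) (z : L) :
    b z h ∈ subalgGen b S := by
  have hle := subalgGen_le ((isSubalgebra_subalgGen S).isSubalgebra_inf_iInf_comap hb)
    fun x hx => Submodule.mem_inf.2 ⟨subset_subalgGen S hx, Submodule.mem_iInf _ |>.2 (hS x hx)⟩
  exact (Submodule.mem_iInf _).1 (Submodule.mem_inf.1 (hle hh)).2 z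

end Leibniz

/-- If `H` is a quasi-ideal of a Leibniz algebra `L` which is generated
as a subalgebra by left Engel elements of `L`, then `H` is an ideal of `L`. -/
theorem quasiIdeal_isIdeal_of_leftEngel_generated (b : L →ₗ[F] L →ₗ[F] L)
    (hb : IsLeibniz b) (S : Set L) (hS : ∀ x ∈ S, IsLeftEngel b x)
    (H : Submodule F L) (hgen : H = subalgGen b S) (hH : IsQuasiIdeal b H) :
    IsIdeal b H := by
  subst hgen
  have hleft : ∀ h ∈ subalgGen b S, ∀ z, b z h ∈ subalgGen b S :=
    fun _ => bracket_mem_subalgGen_of_forall_mem hb fun x hx =>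
      hH.bracket_left_mem_of_isLeftEngel (isSubalgebra_subalgGen S) (subset_subalgGen S hx)
        (hS x hx)
  exact isIdeal_iff.2 ⟨fun _ => hH.bracket_right_mem hb hleft, hleft⟩
end
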